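/- arXiv:1201.2457 — 3 statements merged into one kernel-verified Lean document; each statement's English description precedes it below -/
import Mathlib

section
/- In the formal power series ring (ℚ(v)[x_1,…,x_m])⟦t⟧, the following identity holds: ∏_{i=1}^m (1 − x_i t)(1 + v x_i t)(1 + x_i t)^{−1}(1 − v x_i t)^{−1} = Σ_{α ∈ ℕ^m} (v−1)^{ℓ(α)} Δ_α · x_1^{α_1}⋯x_m^{α_m} · t^{α_1+⋯+α_m}, where the factors (1 + x_i t) and (1 − v x_i t) are invertible power series. -/
noncomputable section

open PowerSeries

/-- The field `ℚ(v)` of rational functions in the indeterminate `v`. -/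
abbrev Fv : Type := RatFunc ℚ

/-- The indeterminate `v`. -/
def vv : Fv := RatFunc.X

/-- `Δ_0 = 1` and `Δ_s = 2(v^s - (-1)^s)/(v+1)` for `s ≥ 1`. -/
def ΔQ (s : ℕ) : Fv := if s = 0 then 1 else 2 * (vv ^ s - (-1 : Fv) ^ s) / (vv + 1)

/-- The polynomial ring `ℚ(v)[x_1, …, x_m]`. -/
abbrev Rm (m : ℕ) : Type := MvPolynomial (Fin m) Fv

/-- `ℓ(α)`: the number of nonzero entries of a tuple `α ∈ ℕ^m`. -/
def lenα {m : ℕ} (α : Fin m → ℕ) : ℕ := (Finset.univ.filter (fun i => α i ≠ 0)).card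

/-- `Δ_α = Δ_{α_1} ⋯ Δ_{α_m}`. -/
def Δα {m : ℕ} (α : Fin m → ℕ) : Fv := ∏ i, ΔQ (α i)

/-- The left-hand side: `∏_{i=1}^m (1 - x_i t)(1 + v x_i t)(1 + x_i t)⁻¹(1 - v x_i t)⁻¹`
as a formal power series in `t` over `ℚ(v)[x_1, …, x_m]`; the inverses are taken via
`Ring.inverse`, which gives the genuine inverse since these factors are units. -/
def lhs (m : ℕ) : PowerSeries (Rm m) :=
  ∏ i : Fin m,
    ((1 - PowerSeries.C (R := Rm m) (MvPolynomial.X i) * PowerSeries.X) *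
      (1 + PowerSeries.C (R := Rm m) (MvPolynomial.C vv * MvPolynomial.X i) * PowerSeries.X) *
      Ring.inverse (1 + PowerSeries.C (R := Rm m) (MvPolynomial.X i) * PowerSeries.X) *
      Ring.inverse
        (1 - PowerSeries.C (R := Rm m) (MvPolynomial.C vv * MvPolynomial.X i) * PowerSeries.X))

/-!
Each factor involves a single variable: it is the image under `t ↦ xᵢ t` of the one-variable
series `(1 - t)(1 + v t)(1 + t)⁻¹(1 - v t)⁻¹`, whose partial fraction decomposition
`1 + B ((1 - v t)⁻¹ - (1 + t)⁻¹)`, `B = 2(v - 1)/(v + 1)`, has `tˢ`-coefficient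
`B (vˢ - (-1)ˢ) = (v - 1) Δ_s` for `s ≥ 1`. Multiplying out the `m` factors, the
`t^d`-coefficient is the sum over all `α` with `|α| = d` of `∏ᵢ (v - 1)^{ℓ(αᵢ)} Δ_{αᵢ} xᵢ^{αᵢ}`.
-/

open Finset

lemma vv_add_one_ne_zero : vv + 1 ≠ 0 := by
  have h : vv + 1 = algebraMap (Polynomial ℚ) Fv (Polynomial.X + 1) := by
    simp [vv, RatFunc.algebraMap_X]
  rw [h]
  refine RatFunc.algebraMap_ne_zero fun h0 => ?_
  simpa [Polynomial.coeff_one] using congrArg (Polynomial.coeff · 1) h0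

theorem PowerSeries.mk_pow_mul_one_sub_C_mul_X {R : Type*} [CommRing R] (a : R) :
    (mk fun n => a ^ n) * (1 - C a * X) = 1 := by
  simpa [rescale_mk] using congrArg (rescale a) (mk_one_mul_one_sub_eq_one R)

theorem PowerSeries.rescale_C {R : Type*} [CommSemiring R] (a r : R) : rescale a (C r) = C r := by
  ext (_ | n) <;> simp [coeff_rescale, coeff_C]

theorem Ring.mul_inverse_mul_inverse_of_mul_eq {M : Type*} [CommMonoidWithZero M] {a b e n : M}
    (ha : IsUnit a) (hb : IsUnit b) (h : e * (a * b) = n) :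
    n * Ring.inverse a * Ring.inverse b = e := by
  rw [← h, show e * (a * b) * Ring.inverse a * Ring.inverse b =
      e * (a * Ring.inverse a) * (b * Ring.inverse b) by ac_rfl,
    Ring.mul_inverse_cancel a ha, Ring.mul_inverse_cancel b hb, mul_one, mul_one]

/-- The coefficients `(v - 1)^{ℓ(s)} Δ_s` of the one-variable factor. -/
def factorCoeff (s : ℕ) : Fv := if s = 0 then 1 else (vv - 1) * ΔQ s

lemma prod_factorCoeff {m : ℕ} (α : Fin m → ℕ) :
    ∏ i, factorCoeff (α i) = (vv - 1) ^ lenα α * Δα α := by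
  have h (s : ℕ) : factorCoeff s = (if s ≠ 0 then vv - 1 else 1) * ΔQ s := by
    by_cases hs : s = 0 <;> simp [factorCoeff, ΔQ, hs]
  rw [Fintype.prod_congr _ _ fun i => h (α i), prod_mul_distrib, ← prod_filter, prod_const]
  rfl

/-- `(1 - t)(1 + v t)(1 + t)⁻¹(1 - v t)⁻¹ = ∑ₛ (v - 1)^{ℓ(s)} Δ_s tˢ` in `ℚ(v)⟦t⟧`. -/
def factorSeries : PowerSeries Fv := mk factorCoeff

/-- Partial fractions: `factorCoeff s = [s = 0] + B (vˢ - (-1)ˢ)` with `B = 2(v - 1)/(v + 1)`,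
also at `s = 0`. -/
lemma factorSeries_eq :
    factorSeries = 1 + C (2 * (vv - 1) / (vv + 1)) *
      ((mk fun n => vv ^ n) - mk fun n => (-1) ^ n) := by
  ext (_ | n)
  · simp [factorSeries, factorCoeff]
  · simp only [factorSeries, factorCoeff, ΔQ, coeff_mk, map_add, map_sub, coeff_one,
      coeff_C_mul, Nat.add_one_ne_zero, if_false]
    field_simp
    ring

lemma factorSeries_mul :
    factorSeries * ((1 + X) * (1 - C vv * X)) = (1 - X) * (1 + C vv * X) := by
  have hgeom₁ := mk_pow_mul_one_sub_C_mul_X vv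
  have hgeom₂ := mk_pow_mul_one_sub_C_mul_X (-1 : Fv)
  have hB : C (2 * (vv - 1) / (vv + 1)) * (C vv + 1) = 2 * (C vv - 1 : PowerSeries Fv) := by
    rw [← map_one C, ← map_add, ← map_mul, div_mul_cancel₀ _ vv_add_one_ne_zero, map_mul,
      map_sub, map_one, map_ofNat]
  rw [map_neg, map_one] at hgeom₂
  rw [factorSeries_eq]
  linear_combination C (2 * (vv - 1) / (vv + 1)) * (1 + X) * hgeom₁ -
    C (2 * (vv - 1) / (vv + 1)) * (1 - C vv * X) * hgeom₂ + X * hB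

/-- Substitution `t ↦ xᵢ t`, after extending scalars from `ℚ(v)` to `ℚ(v)[x_1, …, x_m]`. -/
def substVar {m : ℕ} (i : Fin m) : PowerSeries Fv →+* PowerSeries (Rm m) :=
  (rescale (MvPolynomial.X i)).comp (map MvPolynomial.C)

lemma coeff_substVar_factorSeries {m : ℕ} (i : Fin m) (n : ℕ) :
    coeff n (substVar i factorSeries) = MvPolynomial.C (factorCoeff n) * MvPolynomial.X i ^ n := by
  simp [substVar, factorSeries, coeff_rescale, mul_comm]

lemma lhs_eq_prod_substVar (m : ℕ) : lhs m = ∏ i, substVar i factorSeries := by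
  refine prod_congr rfl fun i _ => Ring.mul_inverse_mul_inverse_of_mul_eq ?_ ?_ ?_
  · simp [isUnit_iff_constantCoeff]
  · simp [isUnit_iff_constantCoeff]
  · simpa only [substVar, RingHom.coe_comp, Function.comp_apply, map_mul, map_add, map_sub,
      map_one, map_X, map_C, rescale_X, rescale_C, mul_assoc] using
      congrArg (substVar i) factorSeries_mul

theorem Finset.sum_finsuppAntidiag_univ_eq_sum_fin {ι M : Type*} [Fintype ι] [DecidableEq ι]
    [AddCommMonoid M] (d : ℕ) (f : (ι → ℕ) → M) :
    ∑ l ∈ finsuppAntidiag univ d, f l =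
      ∑ g : ι → Fin (d + 1), if ∑ i, (g i : ℕ) = d then f (fun i => g i) else 0 := by
  have hle {l : ι →₀ ℕ} (hl : l ∈ finsuppAntidiag univ d) (i : ι) : l i ≤ d := by
    rw [← (mem_finsuppAntidiag.mp hl).1]
    exact single_le_sum (fun j _ => Nat.zero_le (l j)) (mem_univ i)
  rw [← sum_filter]
  refine sum_bij' (fun l hl i => ⟨l i, Nat.lt_succ_of_le (hle hl i)⟩)
    (fun g _ => Finsupp.equivFunOnFinite.symm (g ·)) ?_ ?_ ?_ ?_ ?_
  · exact fun l hl => by simpa using (mem_finsuppAntidiag.mp hl).1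
  · exact fun g hg => by simpa using hg
  · exact fun l _ => by ext; simp
  · exact fun g _ => by ext; simp
  · exact fun _ _ => rfl

/-- In `(ℚ(v)[x_1,…,x_m])⟦t⟧` one has
`∏_i (1-x_i t)(1+v x_i t)(1+x_i t)⁻¹(1-v x_i t)⁻¹
  = Σ_{α ∈ ℕ^m} (v-1)^{ℓ(α)} Δ_α x^α t^{|α|}`,
stated coefficientwise in `t`: for every `d`, the `t^d`-coefficient of the left-hand side
equals the (finite) sum over all `α ∈ ℕ^m` with `|α| = d` (such `α` have all entries `≤ d`,
so they are enumerated by `Fin m → Fin (d+1)`). -/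
theorem statement_2 (m d : ℕ) :
    PowerSeries.coeff (R := Rm m) d (lhs m) =
      ∑ g : Fin m → Fin (d + 1),
        if (∑ i, ((g i : ℕ))) = d then
          MvPolynomial.C ((vv - 1) ^ lenα (fun i => (g i : ℕ)) * Δα (fun i => (g i : ℕ))) *
            ∏ i, (MvPolynomial.X i : Rm m) ^ ((g i : ℕ))
        else 0 := by
  rw [lhs_eq_prod_substVar, coeff_prod, sum_finsuppAntidiag_univ_eq_sum_fin d
    (fun l => ∏ i, coeff (l i) (substVar i factorSeries))]
  simp only [coeff_substVar_factorSeries, prod_mul_distrib, ← map_prod, prod_factorCoeff]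

end
end

section
/- Set x_n := T_1 T_2 ⋯ T_{n−1} and T_i′ := T_i − v + 1 in HC_n. Then: (1) x_n c_i = c_{i+1} x_n for all 1 ≤ i ≤ n−1; (2) x_n c_n = c_1 T_1′ T_2′ ⋯ T_{n−1}′ + (v−1)·( c_2 T_{w_{(1)}} T_2′ ⋯ T_{n−1}′ + c_3 T_{w_{(2)}} T_3′ ⋯ T_{n−1}′ + ⋯ + c_{n−1} T_{w_{(n−2)}} T_{n−1}′ + c_n T_{w_{(n−1)}} ), where T_{w_{(k)}} := T_1 T_2 ⋯ T_{k−1} (and T_{w_{(1)}} = 1). -/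
noncomputable section

/-- The ring `ℤ[1/2]`. -/
abbrev Zh : Type := Localization.Away (2 : ℤ)

/-- The ring `A = ℤ[1/2][v, v⁻¹]` of Laurent polynomials over `ℤ[1/2]`. -/
def Av : Type := LaurentPolynomial Zh

noncomputable instance : CommRing Av := inferInstanceAs (CommRing (LaurentPolynomial Zh))

/-- The indeterminate `v ∈ A`. -/
def vA : Av := (LaurentPolynomial.T 1 : LaurentPolynomial Zh)

/-- Generators of the Hecke–Clifford algebra: `T i` (0-based, for `T_{i+1}` of the paper,
`i = 0, …, n-2`) and `c j` (0-based, for `c_{j+1}`, `j = 0, …, n-1`). -/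
inductive HCgen (n : ℕ) : Type
  | T : Fin (n - 1) → HCgen n
  | c : Fin n → HCgen n

/-- For a `T`-index `i`, the `c`-index of the first strand that `T_i` involves. -/
def lo {n : ℕ} (i : Fin (n - 1)) : Fin n := ⟨i.1, by have := i.2; omega⟩

/-- For a `T`-index `i`, the `c`-index of the second strand that `T_i` involves. -/
def hi {n : ℕ} (i : Fin (n - 1)) : Fin n := ⟨i.1 + 1, by have := i.2; omega⟩

/-- The defining relations of the Hecke–Clifford algebra. -/
inductive HCrel (n : ℕ) : FreeAlgebra Av (HCgen n) → FreeAlgebra Av (HCgen n) → Prop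
  | quad (i : Fin (n - 1)) :
      HCrel n ((FreeAlgebra.ι Av (HCgen.T i) - algebraMap Av (FreeAlgebra Av (HCgen n)) vA) *
        (FreeAlgebra.ι Av (HCgen.T i) + 1)) 0
  | Tcomm (i j : Fin (n - 1)) (h : i.1 + 1 < j.1) :
      HCrel n (FreeAlgebra.ι Av (HCgen.T i) * FreeAlgebra.ι Av (HCgen.T j))
        (FreeAlgebra.ι Av (HCgen.T j) * FreeAlgebra.ι Av (HCgen.T i))
  | braid (i j : Fin (n - 1)) (h : i.1 + 1 = j.1) :
      HCrel n (FreeAlgebra.ι Av (HCgen.T i) * FreeAlgebra.ι Av (HCgen.T j) *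
          FreeAlgebra.ι Av (HCgen.T i))
        (FreeAlgebra.ι Av (HCgen.T j) * FreeAlgebra.ι Av (HCgen.T i) *
          FreeAlgebra.ι Av (HCgen.T j))
  | csq (i : Fin n) :
      HCrel n (FreeAlgebra.ι Av (HCgen.c i) * FreeAlgebra.ι Av (HCgen.c i)) 1
  | canti (i j : Fin n) (h : i ≠ j) :
      HCrel n (FreeAlgebra.ι Av (HCgen.c i) * FreeAlgebra.ι Av (HCgen.c j))
        (-(FreeAlgebra.ι Av (HCgen.c j) * FreeAlgebra.ι Av (HCgen.c i)))
  | Tccomm (i : Fin (n - 1)) (j : Fin n) (h1 : j ≠ lo i) (h2 : j ≠ hi i) :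
      HCrel n (FreeAlgebra.ι Av (HCgen.T i) * FreeAlgebra.ι Av (HCgen.c j))
        (FreeAlgebra.ι Av (HCgen.c j) * FreeAlgebra.ι Av (HCgen.T i))
  | Tc (i : Fin (n - 1)) :
      HCrel n (FreeAlgebra.ι Av (HCgen.T i) * FreeAlgebra.ι Av (HCgen.c (lo i)))
        (FreeAlgebra.ι Av (HCgen.c (hi i)) * FreeAlgebra.ι Av (HCgen.T i))

/-- The Hecke–Clifford algebra `HC_n` over `A`. -/
abbrev HC (n : ℕ) : Type := RingQuot (HCrel n)

/-- The generator `T_i` of `HC_n` (`0`-based index). -/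
def Tg {n : ℕ} (i : Fin (n - 1)) : HC n :=
  RingQuot.mkAlgHom Av (HCrel n) (FreeAlgebra.ι Av (HCgen.T i))

/-- The generator `c_j` of `HC_n` (`0`-based index). -/
def cg {n : ℕ} (j : Fin n) : HC n :=
  RingQuot.mkAlgHom Av (HCrel n) (FreeAlgebra.ι Av (HCgen.c j))

/-- `T_{i_1} ⋯ T_{i_k}` for a word `L = [i_1, …, i_k]`. -/
def Tw {n : ℕ} (L : List (Fin (n - 1))) : HC n := (L.map Tg).prod

/-- `C_I = c_{i_1} ⋯ c_{i_k}` for a subset `I = {i_1 < ⋯ < i_k}`. -/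
def Cset {n : ℕ} (I : Finset (Fin n)) : HC n := ((I.sort (· ≤ ·)).map cg).prod

/-- The `A`-submodule `[HC_n, HC_n]` spanned by all commutators. -/
def commSpan (n : ℕ) : Submodule Av (HC n) :=
  Submodule.span Av {x : HC n | ∃ a b : HC n, x = a * b - b * a}

/-- The simple transposition `s_i = (i+1, i+2)` (paper numbering) in `S_n`. -/
def sgen {n : ℕ} (i : Fin (n - 1)) : Equiv.Perm (Fin n) := Equiv.swap (lo i) (hi i)

/-- The product of the simple transpositions along a word. -/
def wordProd {n : ℕ} (L : List (Fin (n - 1))) : Equiv.Perm (Fin n) := (L.map sgen).prod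

/-- The Coxeter length of a permutation: the minimal length of a word in the simple
transpositions expressing it. -/
def plen {n : ℕ} (σ : Equiv.Perm (Fin n)) : ℕ :=
  sInf {k | ∃ L : List (Fin (n - 1)), wordProd L = σ ∧ L.length = k}

/-- `L` is a reduced expression of `σ`. -/
def IsReducedWord {n : ℕ} (σ : Equiv.Perm (Fin n)) (L : List (Fin (n - 1))) : Prop :=
  wordProd L = σ ∧ L.length = plen σ

/-- The canonical reduced word of the permutation `w_γ` attached to a composition `γ` of `n`:
the increasing list of all `0`-based `T`-indices `i ∈ {0, …, n-2}` such that `i+1` is not a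
partial sum of `γ`. -/
def compWord {n : ℕ} (γ : Composition n) : List (Fin (n - 1)) :=
  (List.finRange (n - 1)).filter (fun i => i.1 + 1 ∉ γ.blocks.scanl (· + ·) 0)

/-- The element `T_{w_γ}` of `HC_n` for a composition `γ` of `n`. -/
def Twγ {n : ℕ} (γ : Composition n) : HC n := Tw (compWord γ)

/-- The permutation `w_γ` attached to a composition `γ` of `n`. -/
def wγ {n : ℕ} (γ : Composition n) : Equiv.Perm (Fin n) := wordProd (compWord γ)

/-- A composition is a partition if its parts are weakly decreasing. -/
def IsPartitionC {n : ℕ} (γ : Composition n) : Prop := γ.blocks.Pairwise (· ≥ ·)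

/-- An odd partition: a partition all of whose parts are odd. -/
def IsOddPartitionC {n : ℕ} (γ : Composition n) : Prop :=
  IsPartitionC γ ∧ ∀ p ∈ γ.blocks, Odd p

instance {n : ℕ} (γ : Composition n) : Decidable (IsOddPartitionC γ) := by
  unfold IsOddPartitionC IsPartitionC
  infer_instance

/-- A trace function on `HC_n`: an `A`-linear map that is symmetric on products and vanishes
on the odd part, i.e. on all elements `T_σ C_I` with `|I|` odd (with `T_σ` given by any
reduced expression of `σ`). -/
def IsTraceFun {n : ℕ} (φ : HC n →ₗ[Av] Av) : Prop :=
  (∀ a b : HC n, φ (a * b) = φ (b * a)) ∧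
  ∀ L : List (Fin (n - 1)), IsReducedWord (wordProd L) L →
    ∀ I : Finset (Fin n), Odd I.card → φ (Tw L * Cset I) = 0

/-- The element `(v - 1)/2 ∈ A`. -/
def halfvm1 : Av := Ring.inverse (2 : Av) * (vA - 1)

/-!
Besides the defining relations, the only identity needed is
`T_i c_{i+1} = c_i T'_i + (v - 1) c_{i+1}`. Indeed `T_i T'_i = v` is a unit, so `T'_i = v T_i⁻¹`,
and inverting `T_i c_i = c_{i+1} T_i` gives `T'_i c_{i+1} = c_i T'_i`; now write
`T_i = T'_i + (v - 1)`.

For (1), `c_i` commutes past `T_{i+1} ⋯ T_{n-1}`, becomes `c_{i+1}` through `T_i`, and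
`c_{i+1}` commutes past `T_1 ⋯ T_{i-1}`.

For (2), put `x_k = T_1 ⋯ T_{k-1}` and `y_k = T'_k ⋯ T'_{n-1}`. The identity above gives
`x_{k+1} c_{k+1} y_{k+1} - x_k c_k y_k = (v - 1) c_{k+1} x_k y_{k+1}`, and the sum over `k`
telescopes from `x_1 c_1 y_1 = c_1 T'_1 ⋯ T'_{n-1}` to `x_n c_n y_n = x_n c_n`.
-/

section Relations

variable {n : ℕ}

local notation "v'" => algebraMap Av (HC n) vA

def Tprime (i : Fin (n - 1)) : HC n := Tg i - v' + 1

theorem Tg_mul_cg_lo (i : Fin (n - 1)) : Tg i * cg (lo i) = cg (hi i) * Tg i := by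
  simpa only [map_mul, Tg, cg] using RingQuot.mkAlgHom_rel Av (HCrel.Tc i)

theorem commute_Tg_cg {i : Fin (n - 1)} {j : Fin n} (h₁ : j ≠ lo i) (h₂ : j ≠ hi i) :
    Commute (Tg i) (cg j) := by
  simpa only [map_mul, Tg, cg, Commute, SemiconjBy]
    using RingQuot.mkAlgHom_rel Av (HCrel.Tccomm i j h₁ h₂)

theorem commute_Tg_Tprime (i : Fin (n - 1)) : Commute (Tg i) (Tprime i) :=
  ((Commute.refl _).sub_right (Algebra.commute_algebraMap_right vA _)).add_right
    (Commute.one_right _)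

theorem Tg_mul_Tprime (i : Fin (n - 1)) : Tg i * Tprime i = v' := by
  have hquad : (Tg i - v') * (Tg i + 1) = 0 := by
    simpa only [map_mul, map_sub, map_add, map_one, map_zero, AlgHom.commutes, Tg]
      using RingQuot.mkAlgHom_rel Av (HCrel.quad i)
  calc Tg i * Tprime i = (Tg i - v') * (Tg i + 1) + v' := by
        simp only [Tprime, sub_mul, mul_sub, mul_add, mul_one, (Algebra.commutes vA (Tg i)).symm]
        abel
    _ = v' := by rw [hquad, zero_add]

theorem Tprime_mul_cg_hi (i : Fin (n - 1)) : Tprime i * cg (hi i) = cg (lo i) * Tprime i := by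
  have hv : IsUnit v' := (LaurentPolynomial.isUnit_T 1).map (algebraMap Av (HC n))
  refine hv.mul_left_cancel ?_
  calc v' * (Tprime i * cg (hi i)) = Tprime i * cg (hi i) * (Tg i * Tprime i) := by
        rw [Tg_mul_Tprime, Algebra.commutes]
    _ = Tprime i * (cg (hi i) * Tg i) * Tprime i := by simp only [mul_assoc]
    _ = Tprime i * Tg i * cg (lo i) * Tprime i := by rw [← Tg_mul_cg_lo, ← mul_assoc]
    _ = v' * (cg (lo i) * Tprime i) := by
        rw [← (commute_Tg_Tprime i).eq, Tg_mul_Tprime, mul_assoc]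

theorem Tg_mul_cg_hi (i : Fin (n - 1)) :
    Tg i * cg (hi i) = cg (lo i) * Tprime i + algebraMap Av (HC n) (vA - 1) * cg (hi i) := by
  have hT : Tg i = Tprime i + algebraMap Av (HC n) (vA - 1) := by
    rw [Tprime, map_sub, map_one]; abel
  rw [← Tprime_mul_cg_hi, ← add_mul, ← hT]

end Relations

namespace List

theorem val_lt_of_mem_take_finRange {m k : ℕ} {j : Fin m} (h : j ∈ (finRange m).take k) :
    j.1 < k := by
  obtain ⟨i, hi, rfl⟩ := mem_take_iff_getElem.mp h
  simp only [getElem_finRange, Fin.val_cast]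
  omega

theorem le_val_of_mem_drop_finRange {m k : ℕ} {j : Fin m} (h : j ∈ (finRange m).drop k) :
    k ≤ j.1 := by
  obtain ⟨i, hi, rfl⟩ := mem_drop_iff_getElem.mp h
  simp

theorem take_finRange_add_one {m : ℕ} (i : Fin m) :
    (finRange m).take (i.1 + 1) = (finRange m).take i.1 ++ [i] := by
  simp [take_add_one]

theorem drop_finRange_eq_cons {m : ℕ} (i : Fin m) :
    (finRange m).drop i.1 = i :: (finRange m).drop (i.1 + 1) := by
  simp [drop_eq_getElem_cons (l := finRange m) (i := i.1) (by simp)]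

end List

theorem sum_hi_sub_lo {M : Type*} [AddCommGroup M] {n : ℕ} (hn : 1 ≤ n) (g : Fin n → M) :
    ∑ j : Fin (n - 1), (g (hi j) - g (lo j)) =
      g ⟨n - 1, Nat.sub_one_lt_of_lt hn⟩ - g ⟨0, hn⟩ := by
  let G : ℕ → M := fun k => if h : k < n then g ⟨k, h⟩ else 0
  have hterm (j : Fin (n - 1)) : g (hi j) - g (lo j) = G (j.1 + 1) - G j.1 := by
    simp only [G, dif_pos (show j.1 + 1 < n by omega), dif_pos (show j.1 < n by omega)]
    rfl
  rw [Finset.sum_congr rfl fun j _ => hterm j,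
    Fin.sum_univ_eq_sum_range (fun k => G (k + 1) - G k), Finset.sum_range_sub]
  simp only [G, dif_pos (show n - 1 < n by omega), dif_pos (show 0 < n by omega)]

section Words

variable {n : ℕ}

theorem Tw_nil : Tw (n := n) [] = 1 := rfl

theorem Tw_cons (i : Fin (n - 1)) (L : List (Fin (n - 1))) : Tw (i :: L) = Tg i * Tw L := by
  simp [Tw]

theorem Tw_append (L₁ L₂ : List (Fin (n - 1))) : Tw (L₁ ++ L₂) = Tw L₁ * Tw L₂ := by
  simp [Tw]

theorem commute_Tw_cg {L : List (Fin (n - 1))} {j : Fin n}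
    (h : ∀ i ∈ L, j ≠ lo i ∧ j ≠ hi i) :
    Commute (Tw L) (cg j) :=
  Commute.list_prod_left _ _ <| List.forall_mem_map.mpr fun i hi =>
    commute_Tg_cg (h i hi).1 (h i hi).2

theorem commute_Tw_take_cg_hi (i : Fin (n - 1)) :
    Commute (Tw ((List.finRange (n - 1)).take i.1)) (cg (hi i)) :=
  commute_Tw_cg fun j hj => by
    have := List.val_lt_of_mem_take_finRange hj
    simp only [ne_eq, lo, hi, Fin.ext_iff]
    omega

theorem commute_Tw_drop_cg_lo (i : Fin (n - 1)) :
    Commute (Tw ((List.finRange (n - 1)).drop (i.1 + 1))) (cg (lo i)) :=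
  commute_Tw_cg fun j hj => by
    have := List.le_val_of_mem_drop_finRange hj
    simp only [ne_eq, lo, hi, Fin.ext_iff]
    omega

theorem Tw_finRange_eq_take_mul_Tg_mul_drop (i : Fin (n - 1)) :
    Tw (List.finRange (n - 1)) =
      Tw ((List.finRange (n - 1)).take i.1) * Tg i *
        Tw ((List.finRange (n - 1)).drop (i.1 + 1)) := by
  rw [mul_assoc, ← Tw_cons, ← List.drop_finRange_eq_cons, ← Tw_append, List.take_append_drop]

theorem Tw_finRange_mul_cg_lo (i : Fin (n - 1)) :
    Tw (List.finRange (n - 1)) * cg (lo i) = cg (hi i) * Tw (List.finRange (n - 1)) := by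
  rw [Tw_finRange_eq_take_mul_Tg_mul_drop i]
  calc _ = Tw ((List.finRange (n - 1)).take i.1) * (Tg i * cg (lo i)) *
        Tw ((List.finRange (n - 1)).drop (i.1 + 1)) := by
        rw [mul_assoc, (commute_Tw_drop_cg_lo i).eq]; simp only [mul_assoc]
    _ = Tw ((List.finRange (n - 1)).take i.1) * cg (hi i) * Tg i *
        Tw ((List.finRange (n - 1)).drop (i.1 + 1)) := by
        rw [Tg_mul_cg_lo]; simp only [mul_assoc]
    _ = _ := by rw [(commute_Tw_take_cg_hi i).eq]; simp only [mul_assoc]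

end Words

section Telescope

variable {n : ℕ}

def TwPrime (L : List (Fin (n - 1))) : HC n := (L.map Tprime).prod

/-- In the 1-based notation of the header, `xcy k` is `x_{k+1} c_{k+1} y_{k+1}`. -/
def xcy (k : Fin n) : HC n :=
  Tw ((List.finRange (n - 1)).take k.1) * cg k * TwPrime ((List.finRange (n - 1)).drop k.1)

theorem xcy_hi_sub_xcy_lo (j : Fin (n - 1)) :
    xcy (hi j) - xcy (lo j) = algebraMap Av (HC n) (vA - 1) *
      (cg (hi j) * Tw ((List.finRange (n - 1)).take j.1) *
        TwPrime ((List.finRange (n - 1)).drop (j.1 + 1))) := by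
  set x := Tw ((List.finRange (n - 1)).take j.1)
  set y := TwPrime ((List.finRange (n - 1)).drop (j.1 + 1))
  have hx : Tw ((List.finRange (n - 1)).take (hi j).1) = x * Tg j := by
    rw [show (hi j).1 = j.1 + 1 from rfl, List.take_finRange_add_one, Tw_append, Tw_cons, Tw_nil,
      mul_one]
  have hy : TwPrime ((List.finRange (n - 1)).drop (lo j).1) = Tprime j * y := by
    rw [show (lo j).1 = j.1 from rfl, List.drop_finRange_eq_cons, TwPrime, List.map_cons,
      List.prod_cons]
    rfl
  calc xcy (hi j) - xcy (lo j) = x * (Tg j * cg (hi j)) * y - x * cg (lo j) * (Tprime j * y) := by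
        rw [xcy, xcy, hx, hy, mul_assoc x]
        rfl
    _ = x * (algebraMap Av (HC n) (vA - 1) * cg (hi j)) * y := by
        rw [Tg_mul_cg_hi]; noncomm_ring
    _ = algebraMap Av (HC n) (vA - 1) * (cg (hi j) * x * y) := by
        rw [← mul_assoc x, ← Algebra.commutes, mul_assoc _ x, (commute_Tw_take_cg_hi j).eq]
        simp only [mul_assoc]
        rfl

theorem xcy_last (hn : 1 ≤ n) :
    xcy ⟨n - 1, Nat.sub_one_lt_of_lt hn⟩ =
      Tw (List.finRange (n - 1)) * cg ⟨n - 1, Nat.sub_one_lt_of_lt hn⟩ := by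
  rw [xcy, List.take_of_length_le (by simp), List.drop_of_length_le (by simp), TwPrime,
    List.map_nil, List.prod_nil, mul_one]

theorem xcy_zero (hn : 1 ≤ n) :
    xcy ⟨0, hn⟩ = cg ⟨0, hn⟩ * TwPrime (List.finRange (n - 1)) := by
  rw [xcy, List.take_zero, List.drop_zero, Tw, List.map_nil, List.prod_nil, one_mul]

theorem Tw_finRange_mul_cg_last (hn : 1 ≤ n) :
    Tw (List.finRange (n - 1)) * cg ⟨n - 1, Nat.sub_one_lt_of_lt hn⟩ =
      cg ⟨0, hn⟩ * TwPrime (List.finRange (n - 1)) +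
        algebraMap Av (HC n) (vA - 1) * ∑ j : Fin (n - 1),
          cg (hi j) * Tw ((List.finRange (n - 1)).take j.1) *
            TwPrime ((List.finRange (n - 1)).drop (j.1 + 1)) := by
  rw [← xcy_last hn, ← xcy_zero hn, Finset.mul_sum,
    ← Finset.sum_congr rfl fun j _ => xcy_hi_sub_xcy_lo j, sum_hi_sub_lo hn xcy,
    add_sub_cancel]

end Telescope

/-- The two identities of Lemma `lem:coxHn` in `HC_n`. -/
theorem statement_4 (n : ℕ) (hn : 1 ≤ n) :
    (∀ i : Fin (n - 1),
      Tw (List.finRange (n - 1)) * cg (lo i) = cg (hi i) * Tw (List.finRange (n - 1))) ∧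
    Tw (List.finRange (n - 1)) * cg ⟨n - 1, by omega⟩ =
      cg ⟨0, by omega⟩ *
          ((List.finRange (n - 1)).map (fun i => Tg i - algebraMap Av (HC n) vA + 1)).prod +
        algebraMap Av (HC n) (vA - 1) *
          ∑ j : Fin (n - 1),
            cg (hi j) * Tw ((List.finRange (n - 1)).take j.1) *
              (((List.finRange (n - 1)).drop (j.1 + 1)).map
                (fun i => Tg i - algebraMap Av (HC n) vA + 1)).prod :=
  ⟨Tw_finRange_mul_cg_lo, Tw_finRange_mul_cg_last hn⟩

end
end

section
/- Let γ = (γ_1,…,γ_ℓ) be a composition of n and let μ = (μ_1,…,μ_ℓ) be the partition obtained by rearranging the parts of γ in decreasing order. Then T_{w_γ} − T_{w_μ} lies in [HC_n, HC_n]. -/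
/-!
Let `F = T_p T_{p+1} ⋯ T_{p+a+b}` be the Coxeter element of the braid group on a window of
`a + b + 2` consecutive strands. Conjugation by `F` shifts `T_j ↦ T_{j+1}` inside the window
and `F^{a+b+2}` is central there, so `F^{b+1}` conjugates the product
`(T_p ⋯ T_{p+a-1}) (T_{p+a+1} ⋯ T_{p+a+b})` of two adjacent blocks of sizes `a + 1, b + 1` into
the product for the blocks in the opposite order. The `T_i` are invertible by the quadratic
relation, so `T_{w_γ}` and `T_{w_μ}` are conjugate in `HC_n`, and `x - g x g⁻¹ = [x g⁻¹, g]`.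
-/

noncomputable section

structure IsBraidFamily {M : Type*} [Monoid M] (t : ℕ → M) (N : ℕ) : Prop where
  comm : ∀ {i j : ℕ}, i + 1 < j → Commute (t i) (t j)
  braid : ∀ {i : ℕ}, i + 2 ≤ N → t i * t (i + 1) * t i = t (i + 1) * t i * t (i + 1)

section Monoid

variable {M : Type*} [Monoid M] {t : ℕ → M} {N : ℕ}

def segmentProd (t : ℕ → M) (p k : ℕ) : M := ((List.range' p k).map t).prod

theorem segmentProd_one (p : ℕ) : segmentProd t p 1 = t p := by
  simp [segmentProd]

theorem segmentProd_add (p k l : ℕ) :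
    segmentProd t p (k + l) = segmentProd t p k * segmentProd t (p + k) l := by
  rw [segmentProd, ← List.range'_append, one_mul, List.map_append, List.prod_append]; rfl

theorem segmentProd_succ (p k : ℕ) :
    segmentProd t p (k + 1) = segmentProd t p k * t (p + k) := by
  rw [segmentProd_add, segmentProd_one]

theorem SemiconjBy.list_prod_map {ι : Type*} {a : M} {f g : ι → M} {L : List ι}
    (h : ∀ i ∈ L, SemiconjBy a (f i) (g i)) : SemiconjBy a (L.map f).prod (L.map g).prod := by
  induction L with
  | nil => exact SemiconjBy.one_right a
  | cons i L ih =>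
    simp only [List.map_cons, List.prod_cons]
    exact (h i List.mem_cons_self).mul_right (ih fun j hj => h j (List.mem_cons_of_mem i hj))

namespace IsBraidFamily

theorem commute_prod_map (ht : IsBraidFamily t N) {L₁ L₂ : List ℕ}
    (h : ∀ i ∈ L₁, ∀ j ∈ L₂, i + 1 < j) : Commute (L₁.map t).prod (L₂.map t).prod :=
  Commute.list_prod_left _ _ fun _ hx => by
    obtain ⟨i, hi, rfl⟩ := List.mem_map.mp hx
    exact Commute.list_prod_right _ _ fun _ hy => by
      obtain ⟨j, hj, rfl⟩ := List.mem_map.mp hy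
      exact ht.comm (h i hi j hj)

theorem commute_segmentProd (ht : IsBraidFamily t N) {p k q l : ℕ} (h : p + k < q) :
    Commute (segmentProd t p k) (segmentProd t q l) :=
  ht.commute_prod_map fun i hi j hj => by
    rw [List.mem_range'_1] at hi hj
    omega

theorem semiconjBy_segmentProd (ht : IsBraidFamily t N) {p k j : ℕ} (hpj : p ≤ j)
    (hjk : j + 2 ≤ p + k) (hkN : p + k ≤ N) :
    SemiconjBy (segmentProd t p k) (t j) (t (j + 1)) := by
  obtain ⟨r, rfl⟩ : ∃ r, k = (j - p) + (1 + (1 + r)) := ⟨k - (j - p) - 2, by omega⟩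
  set L := segmentProd t p (j - p)
  set R := segmentProd t (j + 2) r
  have hsplit : segmentProd t p (j - p + (1 + (1 + r))) = L * (t j * (t (j + 1) * R)) := by
    rw [segmentProd_add, segmentProd_add, segmentProd_add, segmentProd_one, segmentProd_one,
      show p + (j - p) = j by omega]
  have hL : Commute L (t (j + 1)) := by
    simpa [segmentProd_one] using
      ht.commute_segmentProd (k := j - p) (q := j + 1) (l := 1) (by omega)
  have hR : Commute (t j) R := by
    simpa [segmentProd_one] using
      ht.commute_segmentProd (p := j) (k := 1) (q := j + 2) (l := r) (by omega)
  rw [SemiconjBy, hsplit]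
  calc L * (t j * (t (j + 1) * R)) * t j
      = L * (t j * t (j + 1) * t j) * R := by simp only [mul_assoc, hR.eq]
    _ = L * (t (j + 1) * t j * t (j + 1)) * R := by rw [ht.braid (by omega)]
    _ = t (j + 1) * (L * (t j * (t (j + 1) * R))) := by
      simp only [mul_assoc]; rw [← mul_assoc L, hL.eq, mul_assoc]

theorem semiconjBy_segmentProd_segmentProd (ht : IsBraidFamily t N) {p K q k : ℕ}
    (hpq : p ≤ q) (hqk : q + k + 1 ≤ p + K) (hKN : p + K ≤ N) :
    SemiconjBy (segmentProd t p K) (segmentProd t q k) (segmentProd t (q + 1) k) := by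
  have h := SemiconjBy.list_prod_map (a := segmentProd t p K) (L := List.range' q k) (f := t)
    (g := fun i => t (1 + i)) fun i hi => by
      rw [List.mem_range'_1] at hi
      rw [add_comm 1 i]
      exact ht.semiconjBy_segmentProd (by omega) (by omega) hKN
  rwa [← Function.comp_def t, ← List.map_map, List.map_add_range', add_comm 1 q] at h

theorem semiconjBy_segmentProd_pow (ht : IsBraidFamily t N) {p K q k : ℕ} (s : ℕ)
    (hpq : p ≤ q) (hqk : q + k + s ≤ p + K) (hKN : p + K ≤ N) :
    SemiconjBy (segmentProd t p K ^ s) (segmentProd t q k) (segmentProd t (q + s) k) := by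
  induction s generalizing q with
  | zero => rw [pow_zero]; exact SemiconjBy.one_left _
  | succ s ih =>
    rw [pow_succ, show q + (s + 1) = q + 1 + s by omega]
    exact (ih (by omega) (by omega)).mul_left
      (ht.semiconjBy_segmentProd_segmentProd hpq (by omega) hKN)

theorem segmentProd_succ_succ_sq (ht : IsBraidFamily t N) {p k : ℕ} (hkN : p + k + 2 ≤ N) :
    segmentProd t p (k + 2) ^ 2 = segmentProd t p (k + 1) ^ 2 * (t (p + k + 1) * t (p + k)) := by
  set H := segmentProd t p k
  set a := t (p + k)
  set b := t (p + k + 1)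
  have hG : segmentProd t p (k + 1) = H * a := segmentProd_succ p k
  have hF : segmentProd t p (k + 2) = H * a * b := by rw [segmentProd_succ, hG]; rfl
  have hbH : Commute b H := by
    simpa [segmentProd_one] using
      (ht.commute_segmentProd (p := p) (k := k) (q := p + k + 1) (l := 1) (by omega)).symm
  rw [hF, hG]
  calc (H * a * b) ^ 2 = H * a * H * (b * a * b) := by
        rw [sq]; simp only [mul_assoc]; rw [← mul_assoc b H, hbH.eq, mul_assoc]
    _ = H * a * H * (a * b * a) := by rw [ht.braid (by omega)]
    _ = (H * a) ^ 2 * (b * a) := by rw [sq]; simp only [mul_assoc]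

theorem semiconjBy_segmentProd_sq (ht : IsBraidFamily t N) {p k : ℕ} (hkN : p + k + 1 ≤ N) :
    SemiconjBy (segmentProd t p (k + 1) ^ 2) (t (p + k)) (t p) := by
  induction k with
  | zero => rw [segmentProd_one]; exact (Commute.refl (t p)).pow_left 2
  | succ k ih =>
    set G := segmentProd t p (k + 1)
    rw [ht.segmentProd_succ_succ_sq (by omega), SemiconjBy]
    calc G ^ 2 * (t (p + k + 1) * t (p + k)) * t (p + k + 1)
        = G ^ 2 * t (p + k) * (t (p + k + 1) * t (p + k)) := by
          rw [mul_assoc _ _ (t (p + k + 1)), ← ht.braid (by omega)]; simp only [mul_assoc]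
      _ = t p * (G ^ 2 * (t (p + k + 1) * t (p + k))) := by
          rw [(ih (by omega)).eq, mul_assoc]

theorem commute_segmentProd_pow_apply (ht : IsBraidFamily t N) {p k j : ℕ} (hpj : p ≤ j)
    (hjk : j ≤ p + k) (hkN : p + k + 1 ≤ N) :
    Commute (segmentProd t p (k + 1) ^ (k + 2)) (t j) := by
  have h₁ := ht.semiconjBy_segmentProd_pow (K := k + 1) (q := j) (k := 1) (p + k - j) hpj
    (by omega) (by omega)
  have h₂ := ht.semiconjBy_segmentProd_pow (K := k + 1) (q := p) (k := 1) (j - p) le_rfl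
    (by omega) (by omega)
  rw [segmentProd_one, segmentProd_one, show j + (p + k - j) = p + k by omega] at h₁
  rw [segmentProd_one, segmentProd_one, show p + (j - p) = j by omega] at h₂
  have h := (h₂.mul_left (ht.semiconjBy_segmentProd_sq hkN)).mul_left h₁
  rwa [← pow_add, ← pow_add, show j - p + 2 + (p + k - j) = k + 2 by omega] at h

theorem commute_segmentProd_pow (ht : IsBraidFamily t N) {p k q l : ℕ} (hpq : p ≤ q)
    (hql : q + l ≤ p + k + 1) (hkN : p + k + 1 ≤ N) :
    Commute (segmentProd t p (k + 1) ^ (k + 2)) (segmentProd t q l) :=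
  Commute.list_prod_right _ _ fun _ hx => by
    obtain ⟨j, hj, rfl⟩ := List.mem_map.mp hx
    rw [List.mem_range'_1] at hj
    exact ht.commute_segmentProd_pow_apply (by omega) (by omega) hkN

end IsBraidFamily

end Monoid

/-- The reduced word of `w_γ` for the composition with parts `bl`, strands counted from `p`. -/
def blockWord : List ℕ → ℕ → List ℕ
  | [], _ => []
  | a :: bl, p => List.range' p (a - 1) ++ blockWord bl (p + a)

theorem blockWord_append (l₁ l₂ : List ℕ) (p : ℕ) :
    blockWord (l₁ ++ l₂) p = blockWord l₁ p ++ blockWord l₂ (p + l₁.sum) := by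
  induction l₁ generalizing p with
  | nil => simp [blockWord]
  | cons a l₁ ih => simp [blockWord, ih, add_assoc]

theorem bounds_of_mem_blockWord {bl : List ℕ} {p j : ℕ} (h : j ∈ blockWord bl p) :
    p ≤ j ∧ j + 2 ≤ p + bl.sum := by
  induction bl generalizing p with
  | nil => simp [blockWord] at h
  | cons a bl ih =>
    rw [blockWord, List.mem_append, List.mem_range'_1] at h
    rw [List.sum_cons]
    rcases h with h | h
    · omega
    · have := ih h
      omega

section Monoid

variable {M : Type*} [Monoid M] {t : ℕ → M} {N : ℕ}

def blockProd (t : ℕ → M) (bl : List ℕ) : M := ((blockWord bl 0).map t).prod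

theorem blockProd_append_cons_cons (pre post : List ℕ) (a b : ℕ) :
    blockProd t (pre ++ (a + 1) :: (b + 1) :: post) =
      ((blockWord pre 0).map t).prod *
        (segmentProd t pre.sum a * segmentProd t (pre.sum + a + 1) b) *
        ((blockWord post (pre.sum + (a + b + 2))).map t).prod := by
  simp only [blockProd, segmentProd, blockWord_append, blockWord, List.map_append,
    List.prod_append, zero_add, Nat.add_sub_cancel, mul_assoc]
  rw [show pre.sum + (a + 1) + (b + 1) = pre.sum + (a + b + 2) by omega]
  rfl

theorem IsBraidFamily.unit (ht : IsBraidFamily t N)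
    (hu : ∀ i, IsUnit (t i)) : IsBraidFamily (fun i => (hu i).unit) N where
  comm hij := Units.ext (by simpa using (ht.comm hij).eq)
  braid hi := Units.ext (by simpa using ht.braid hi)

theorem val_blockProd_unit (hu : ∀ i, IsUnit (t i))
    (bl : List ℕ) : ((blockProd (fun i => (hu i).unit) bl : Mˣ) : M) = blockProd t bl := by
  rw [blockProd, blockProd, ← Units.coeHom_apply, map_list_prod, List.map_map]
  rfl

end Monoid

section Group

variable {G : Type*} [Group G] {t : ℕ → G} {N : ℕ}

theorem IsBraidFamily.semiconjBy_swap_segmentProd (ht : IsBraidFamily t N) {p a b : ℕ}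
    (hN : p + a + b + 1 ≤ N) :
    SemiconjBy (segmentProd t p (a + b + 1) ^ (b + 1))
      (segmentProd t p a * segmentProd t (p + a + 1) b)
      (segmentProd t p b * segmentProd t (p + b + 1) a) := by
  set F := segmentProd t p (a + b + 1)
  have hA : SemiconjBy (F ^ (b + 1)) (segmentProd t p a) (segmentProd t (p + b + 1) a) :=
    ht.semiconjBy_segmentProd_pow (b + 1) le_rfl (by omega) (by omega)
  have hB : SemiconjBy (F ^ (a + 1)) (segmentProd t p b) (segmentProd t (p + a + 1) b) :=
    ht.semiconjBy_segmentProd_pow (a + 1) le_rfl (by omega) (by omega)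
  have hcentral : Commute (F ^ (a + b + 2)) (segmentProd t p b) :=
    ht.commute_segmentProd_pow le_rfl (by omega) (by omega)
  have hB' : SemiconjBy (F ^ (b + 1)) (segmentProd t (p + a + 1) b) (segmentProd t p b) := by
    have h := SemiconjBy.mul_left hcentral hB.inv_symm_left
    rwa [← pow_sub _ (by omega), show a + b + 2 - (a + 1) = b + 1 by omega] at h
  have hfar : Commute (segmentProd t p b) (segmentProd t (p + b + 1) a) :=
    ht.commute_segmentProd (by omega)
  rw [hfar.eq]
  exact hA.mul_right hB'

theorem IsBraidFamily.isConj_blockProd_swap (ht : IsBraidFamily t N) (pre post : List ℕ)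
    {a b : ℕ} (ha : 0 < a) (hb : 0 < b) (hN : (pre ++ a :: b :: post).sum ≤ N + 1) :
    IsConj (blockProd t (pre ++ a :: b :: post)) (blockProd t (pre ++ b :: a :: post)) := by
  obtain ⟨a, rfl⟩ := Nat.exists_eq_add_one_of_ne_zero ha.ne'
  obtain ⟨b, rfl⟩ := Nat.exists_eq_add_one_of_ne_zero hb.ne'
  set p := pre.sum
  have hpab : p + a + b + 1 ≤ N := by
    simp only [List.sum_append, List.sum_cons] at hN
    omega
  set g := segmentProd t p (a + b + 1) ^ (b + 1)
  have hpre : Commute g ((blockWord pre 0).map t).prod := by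
    refine (ht.commute_prod_map fun i hi j hj => ?_).symm.pow_left _
    have := bounds_of_mem_blockWord hi
    rw [List.mem_range'_1] at hj
    omega
  have hpost : Commute g ((blockWord post (p + (a + b + 2))).map t).prod := by
    refine (ht.commute_prod_map fun i hi j hj => ?_).pow_left _
    have := bounds_of_mem_blockWord hj
    rw [List.mem_range'_1] at hi
    omega
  have h := SemiconjBy.mul_right
    (SemiconjBy.mul_right hpre (ht.semiconjBy_swap_segmentProd hpab)) hpost
  rw [← blockProd_append_cons_cons, add_comm a b, ← blockProd_append_cons_cons] at h
  exact isConj_iff.mpr ⟨g, by rw [h.eq, mul_inv_cancel_right]⟩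

theorem IsBraidFamily.isConj_blockProd_of_perm (ht : IsBraidFamily t N) {l₁ l₂ : List ℕ}
    (h : l₁.Perm l₂) (hpos : ∀ a ∈ l₁, 0 < a) (hN : l₁.sum ≤ N + 1) :
    IsConj (blockProd t l₁) (blockProd t l₂) := by
  suffices key : ∀ pre : List ℕ, (pre ++ l₁).sum ≤ N + 1 →
      IsConj (blockProd t (pre ++ l₁)) (blockProd t (pre ++ l₂)) from key [] hN
  clear hN
  induction h with
  | nil => exact fun _ _ => IsConj.refl _
  | cons x _ ih =>
    intro pre hN
    simpa using
      ih (fun a ha => hpos a (List.mem_cons_of_mem x ha)) (pre ++ [x]) (by simpa using hN)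
  | swap x y l =>
    intro pre hN
    exact ht.isConj_blockProd_swap pre l (hpos y (by simp)) (hpos x (by simp)) hN
  | trans h₁₂ _ ih₁₂ ih₂₃ =>
    intro pre hN
    refine (ih₁₂ hpos pre hN).trans (ih₂₃ (fun a ha => hpos a (h₁₂.symm.subset ha)) pre ?_)
    rwa [List.sum_append, ← h₁₂.sum_eq, ← List.sum_append]

end Group

theorem le_of_mem_scanl_add {p x : ℕ} {l : List ℕ} (h : x ∈ l.scanl (· + ·) p) : p ≤ x := by
  induction l generalizing p with
  | nil => simp_all
  | cons a l ih =>
    rw [List.scanl_cons, List.mem_cons] at h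
    rcases h with rfl | h
    · rfl
    · exact (Nat.le_add_right p a).trans (ih h)

theorem self_mem_scanl_add (p : ℕ) (l : List ℕ) : p ∈ l.scanl (· + ·) p := by
  cases l <;> simp [List.scanl_cons]

theorem add_sum_mem_scanl_add (p : ℕ) (l : List ℕ) : p + l.sum ∈ l.scanl (· + ·) p := by
  induction l generalizing p with
  | nil => simp
  | cons a l ih => simpa [List.scanl_cons, add_assoc] using Or.inr (ih (p + a))

theorem filter_range'_eq_blockWord (bl : List ℕ) (hbl : ∀ a ∈ bl, 0 < a) (p : ℕ) :
    (List.range' p bl.sum).filter (fun i => i + 1 ∉ bl.scanl (· + ·) p) = blockWord bl p := by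
  induction bl generalizing p with
  | nil => rfl
  | cons a bl ih =>
    obtain ⟨a, rfl⟩ := Nat.exists_eq_add_one_of_ne_zero (hbl _ List.mem_cons_self).ne'
    rw [List.sum_cons, ← List.range'_append, one_mul, List.filter_append, List.scanl_cons,
      blockWord, Nat.add_sub_cancel, List.range'_concat, one_mul, List.filter_append]
    have hhead : (List.range' p a).filter
        (fun i => i + 1 ∉ p :: bl.scanl (· + ·) (p + (a + 1))) = List.range' p a := by
      refine List.filter_eq_self.mpr fun i hi => ?_
      rw [List.mem_range'_1] at hi
      have : ∀ x ∈ bl.scanl (· + ·) (p + (a + 1)), i + 1 < x := fun x hx =>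
        (le_of_mem_scanl_add hx).trans_lt' (by omega)
      simp only [List.mem_cons, not_or, decide_eq_true_eq]
      exact ⟨by omega, fun h => (this _ h).false⟩
    have hcut : [p + a].filter (fun i => i + 1 ∉ p :: bl.scanl (· + ·) (p + (a + 1))) = [] := by
      simp [← add_assoc, self_mem_scanl_add]
    have htail : (List.range' (p + (a + 1)) bl.sum).filter
          (fun i => i + 1 ∉ p :: bl.scanl (· + ·) (p + (a + 1))) =
        (List.range' (p + (a + 1)) bl.sum).filter
          (fun i => i + 1 ∉ bl.scanl (· + ·) (p + (a + 1))) := by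
      refine List.filter_congr fun i hi => ?_
      rw [List.mem_range'_1] at hi
      simp only [List.mem_cons, show i + 1 ≠ p by omega, false_or]
    rw [hhead, hcut, htail, ih (fun b hb => hbl b (List.mem_cons_of_mem _ hb)), List.append_nil]

theorem compWord_map_val {n : ℕ} (γ : Composition n) :
    (compWord γ).map Fin.val = blockWord γ.blocks 0 := by
  have hfilter : (compWord γ).map Fin.val =
      (List.range' 0 (n - 1)).filter (fun i => i + 1 ∉ γ.blocks.scanl (· + ·) 0) := by
    rw [compWord, ← List.range_eq_range', ← List.map_coe_finRange_eq_range, List.filter_map]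
    rfl
  rw [hfilter, ← filter_range'_eq_blockWord γ.blocks (fun _ => γ.one_le_blocks) 0, γ.blocks_sum]
  cases n with
  | zero => rfl
  | succ n =>
    have hlast : n + 1 ∈ γ.blocks.scanl (· + ·) 0 := by
      simpa [γ.blocks_sum] using add_sum_mem_scanl_add 0 γ.blocks
    simp [List.range'_concat, List.filter_append, hlast]

section HeckeClifford

variable {n : ℕ}

theorem Tg_mul_Tg_add_one_sub (i : Fin (n - 1)) :
    Tg i * (Tg i + 1 - algebraMap Av (HC n) vA) = algebraMap Av (HC n) vA := by
  set v := algebraMap Av (HC n) vA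
  have hquad : (Tg i - v) * (Tg i + 1) = 0 := by
    simpa [Tg] using RingQuot.mkAlgHom_rel Av (HCrel.quad (n := n) i)
  have hv : v * Tg i = Tg i * v := Algebra.commutes _ _
  rw [← sub_eq_zero, ← hquad]
  simp only [mul_add, mul_sub, sub_mul, mul_one, hv]
  abel

theorem isUnit_Tg (i : Fin (n - 1)) : IsUnit (Tg i) := by
  have hv : IsUnit (algebraMap Av (HC n) vA) := (LaurentPolynomial.isUnit_T 1).map _
  have hc : Commute (Tg i) (Tg i + 1 - algebraMap Av (HC n) vA) :=
    ((Commute.refl _).add_right (Commute.one_right _)).sub_right (Algebra.commutes _ _).symm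
  rw [← Tg_mul_Tg_add_one_sub i, hc.isUnit_mul_iff] at hv
  exact hv.1

theorem Tg_commute {i j : Fin (n - 1)} (h : i.1 + 1 < j.1) : Commute (Tg i) (Tg j) := by
  show Tg i * Tg j = Tg j * Tg i
  simpa [Tg] using RingQuot.mkAlgHom_rel Av (HCrel.Tcomm (n := n) i j h)

theorem Tg_braid {i j : Fin (n - 1)} (h : i.1 + 1 = j.1) :
    Tg i * Tg j * Tg i = Tg j * Tg i * Tg j := by
  simpa [Tg] using RingQuot.mkAlgHom_rel Av (HCrel.braid (n := n) i j h)

/-- `T_j` indexed by `ℕ`, with the junk value `1` for `j ≥ n - 1`, which keeps far commutation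
valid for all pairs of indices. -/
def Tnat (j : ℕ) : HC n := if h : j < n - 1 then Tg ⟨j, h⟩ else 1

theorem isUnit_Tnat (j : ℕ) : IsUnit (Tnat (n := n) j) := by
  unfold Tnat
  split_ifs
  exacts [isUnit_Tg _, isUnit_one]

theorem isBraidFamily_Tnat : IsBraidFamily (Tnat (n := n)) (n - 1) where
  comm {i j} hij := by
    unfold Tnat
    by_cases hj : j < n - 1
    · rw [dif_pos (by omega), dif_pos hj]
      exact Tg_commute hij
    · rw [dif_neg hj]
      exact Commute.one_right _
  braid {i} hi := by
    unfold Tnat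
    rw [dif_pos (by omega), dif_pos (by omega)]
    exact Tg_braid rfl

theorem Twγ_eq_blockProd (γ : Composition n) : Twγ γ = blockProd Tnat γ.blocks := by
  rw [blockProd, ← compWord_map_val, List.map_map, Twγ, Tw]
  congr 1
  refine List.map_congr_left fun i _ => ?_
  simp [Tnat, i.2]

theorem IsConj.sub_mem_commSpan {u v : (HC n)ˣ} (h : IsConj u v) :
    (u : HC n) - v ∈ commSpan n := by
  obtain ⟨c, rfl⟩ := isConj_iff.mp h
  refine Submodule.subset_span ⟨u * c⁻¹, c, ?_⟩
  simp [mul_assoc]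

end HeckeClifford

theorem statement_8_general (n : ℕ) (γ μ : Composition n)
    (hperm : List.Perm μ.blocks γ.blocks) :
    Twγ γ - Twγ μ ∈ commSpan n := by
  have hconj := ((isBraidFamily_Tnat (n := n)).unit isUnit_Tnat).isConj_blockProd_of_perm
    hperm.symm (fun _ => γ.one_le_blocks) (by rw [γ.blocks_sum]; omega)
  rw [Twγ_eq_blockProd, Twγ_eq_blockProd, ← val_blockProd_unit isUnit_Tnat γ.blocks,
    ← val_blockProd_unit isUnit_Tnat μ.blocks]
  exact hconj.sub_mem_commSpan

/-- If `μ` is the partition obtained by rearranging the parts of a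
composition `γ` of `n` in decreasing order, then `T_{w_γ} ≡ T_{w_μ} mod [HC_n, HC_n]`. -/
theorem statement_8 (n : ℕ) (hn : 1 ≤ n) (γ μ : Composition n)
    (hperm : List.Perm μ.blocks γ.blocks) (hsort : μ.blocks.Pairwise (· ≥ ·)) :
    Twγ γ - Twγ μ ∈ commSpan n :=
  statement_8_general n γ μ hperm

end
end
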